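/- Under the hypotheses of the general Laplace-type expansion (f(ρ,Ω) = ρ^ν Σ_{j=0}^{N} f_j(Ω)ρ^j + o(ρ^{N+ν}) with f₀ > 0 continuous, g(ρ,Ω) = ρ^{λ−d} Σ_{j=0}^{N} g_j(Ω)ρ^j + o(ρ^{N+λ−d}), f attaining unique minimum 0 at 0 and otherwise bounded away from 0, and ∫_R e^{−k₀f} g dx convergent for some k₀ > 0), the leading coefficient in the expansion ∫_R e^{−kf} g dx = ζ₀ k^{−λ/ν} + o(k^{−λ/ν}) is ζ₀ = (1/ν) Γ(λ/ν) ∫_{S^{d−1}} g₀(Ω) f₀(Ω)^{−λ/ν} dΩ. -/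

import Mathlib

/-!
Split `R` into a small ball around `0` and its complement. Off the ball `f ≥ c > 0`, so that part
is `O(exp (-c k))`. On the ball pass to polar coordinates `x = r • Ω` and substitute
`r = k ^ (-1/ν) * s`: the integrand of `k ^ (λ/ν) * ∫_ball exp (-k f) g` becomes
`(r ^ (d - λ) * g (r • Ω)) * s ^ (λ - 1) * exp (-(r ^ (-ν) * f (r • Ω)) * s ^ ν)`. As `k → ∞` this
tends to `g₀ Ω * s ^ (λ - 1) * exp (-f₀ Ω * s ^ ν)`, and, with `m = min f₀ > 0`, it is dominated
by `(|g₀ Ω| + 1) * s ^ (λ - 1) * exp (-(m / 2) * s ^ ν)`. Dominated convergence and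
`∫₀^∞ s ^ (λ - 1) * exp (-a * s ^ ν) ds = Γ(λ/ν) * a ^ (-λ/ν) / ν` give the constant.
-/

open Asymptotics Filter MeasureTheory Set Metric Real Topology

namespace MeasureTheory

theorem integral_volumeIoiPow (n : ℕ) (h : ℝ → ℝ) :
    ∫ r, h r ∂(Measure.volumeIoiPow n) = ∫ r in Ioi (0 : ℝ), r ^ n * h r := by
  rw [Measure.volumeIoiPow, integral_withDensity_eq_integral_toReal_smul
      (measurable_subtype_coe.pow_const n).ennreal_ofReal
      (.of_forall fun _ => ENNReal.ofReal_lt_top),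
    integral_subtype_comap measurableSet_Ioi fun r => (ENNReal.ofReal (r ^ n)).toReal • h r]
  refine setIntegral_congr_fun measurableSet_Ioi fun r hr => ?_
  rw [ENNReal.toReal_ofReal (pow_nonneg (le_of_lt hr) n), smul_eq_mul]

variable {E : Type*} [NormedAddCommGroup E] [NormedSpace ℝ E] [FiniteDimensional ℝ E]
  [Nontrivial E] [MeasurableSpace E] [BorelSpace E] (μ : Measure E) [μ.IsAddHaarMeasure]

theorem integral_eq_integral_sphere_integral_Ioi {F : E → ℝ} (hF : Integrable F μ) :
    ∫ x, F x ∂μ = ∫ Ω, (∫ r in Ioi (0 : ℝ), r ^ (Module.finrank ℝ E - 1) * F (r • (Ω : E)))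
      ∂μ.toSphere := by
  have hμ := μ.measurePreserving_homeomorphUnitSphereProd
  have hemb := (homeomorphUnitSphereProd E).measurableEmbedding
  set G : sphere (0 : E) 1 × Ioi (0 : ℝ) → ℝ := fun p => F (p.2.1 • p.1.1)
  have hG : G ∘ homeomorphUnitSphereProd E = F ∘ Subtype.val := by
    funext x
    simp [G, smul_inv_smul₀ (norm_ne_zero_iff.2 x.2)]
  have hFc : Integrable (F ∘ Subtype.val) (μ.comap ((↑) : ({0}ᶜ : Set E) → E)) := by
    rw [← integrableOn_iff_comap_subtypeVal (measurableSet_singleton 0).compl]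
    exact hF.integrableOn
  calc ∫ x, F x ∂μ = ∫ x : ({0}ᶜ : Set E), F x ∂(μ.comap (↑)) := by
        rw [integral_subtype_comap (measurableSet_singleton 0).compl,
          restrict_compl_singleton]
    _ = ∫ p, G p ∂(μ.toSphere.prod (Measure.volumeIoiPow (Module.finrank ℝ E - 1))) := by
        rw [← hμ.integral_comp hemb, ← Function.comp_def G, hG, Function.comp_def]
    _ = _ := by
        rw [integral_prod G ((hμ.integrable_comp_emb hemb).1 (hG ▸ hFc))]
        exact congrArg (integral _)
          (funext fun Ω => integral_volumeIoiPow _ fun r => F (r • (Ω : E)))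

end MeasureTheory

section RadialAsymptotic

variable {E : Type*} [NormedAddCommGroup E] [NormedSpace ℝ E]

/-- `h (ρ • Ω) = ρ ^ a * h₀ Ω + o(ρ ^ a)` as `ρ → 0⁺`, uniformly in `Ω`. -/
def RadialAsymptotic (h : E → ℝ) (a : ℝ) (h₀ : sphere (0 : E) 1 → ℝ) : Prop :=
  ∀ ε > 0, ∃ δ > 0, ∀ ρ : ℝ, 0 < ρ → ρ < δ → ∀ Ω : sphere (0 : E) 1,
    |h (ρ • (Ω : E)) - ρ ^ a * h₀ Ω| ≤ ε * ρ ^ a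

variable {h : E → ℝ} {a : ℝ} {h₀ : sphere (0 : E) 1 → ℝ}

theorem RadialAsymptotic.abs_rpow_neg_mul_sub_le (hh : RadialAsymptotic h a h₀) {ε : ℝ}
    (hε : 0 < ε) : ∃ δ > 0, ∀ ρ : ℝ, 0 < ρ → ρ < δ → ∀ Ω : sphere (0 : E) 1,
      |ρ ^ (-a) * h (ρ • (Ω : E)) - h₀ Ω| ≤ ε := by
  obtain ⟨δ, hδ, H⟩ := hh ε hε
  refine ⟨δ, hδ, fun ρ hρ hρδ Ω => ?_⟩
  have hρa : 0 < ρ ^ a := rpow_pos_of_pos hρ a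
  have key : ρ ^ (-a) * h (ρ • (Ω : E)) - h₀ Ω =
      (h (ρ • (Ω : E)) - ρ ^ a * h₀ Ω) / ρ ^ a := by
    rw [rpow_neg hρ.le]
    field_simp
  rw [key, abs_div, abs_of_pos hρa, div_le_iff₀ hρa]
  exact H ρ hρ hρδ Ω

theorem RadialAsymptotic.tendsto (hh : RadialAsymptotic h a h₀) (Ω : sphere (0 : E) 1) :
    Tendsto (fun ρ : ℝ => ρ ^ (-a) * h (ρ • (Ω : E))) (𝓝[>] 0) (𝓝 (h₀ Ω)) := by
  refine Metric.tendsto_nhdsWithin_nhds.2 fun ε hε => ?_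
  obtain ⟨δ, hδ, H⟩ := hh.abs_rpow_neg_mul_sub_le (half_pos hε)
  refine ⟨δ, hδ, fun {ρ} (hρ : 0 < ρ) hρδ => ?_⟩
  rw [Real.dist_eq, sub_zero, abs_of_pos hρ] at hρδ
  exact (H ρ hρ hρδ Ω).trans_lt (half_lt_self hε)

theorem RadialAsymptotic.exists_le_rpow_neg_mul (hh : RadialAsymptotic h a h₀) {m c : ℝ}
    (hm : ∀ Ω, m ≤ h₀ Ω) (hc : c < m) : ∃ δ > 0, ∀ ρ : ℝ, 0 < ρ → ρ < δ →
      ∀ Ω : sphere (0 : E) 1, c ≤ ρ ^ (-a) * h (ρ • (Ω : E)) := by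
  obtain ⟨δ, hδ, H⟩ := hh.abs_rpow_neg_mul_sub_le (sub_pos.2 hc)
  refine ⟨δ, hδ, fun ρ hρ hρδ Ω => ?_⟩
  linarith [(abs_le.1 (H ρ hρ hρδ Ω)).1, hm Ω]

theorem RadialAsymptotic.exists_abs_rpow_neg_mul_le (hh : RadialAsymptotic h a h₀) :
    ∃ δ > 0, ∀ ρ : ℝ, 0 < ρ → ρ < δ →
      ∀ Ω : sphere (0 : E) 1, |ρ ^ (-a) * h (ρ • (Ω : E))| ≤ |h₀ Ω| + 1 := by
  obtain ⟨δ, hδ, H⟩ := hh.abs_rpow_neg_mul_sub_le one_pos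
  refine ⟨δ, hδ, fun ρ hρ hρδ Ω => ?_⟩
  linarith [H ρ hρ hρδ Ω, abs_sub_abs_le_abs_sub (ρ ^ (-a) * h (ρ • (Ω : E))) (h₀ Ω)]

end RadialAsymptotic

section Laplace

variable {α : Type*} [MeasurableSpace α] {μ : Measure α} {S : Set α} {f g : α → ℝ} {k₀ : ℝ}

theorem MeasureTheory.IntegrableOn.exp_neg_mul_mul_of_le
    (hint : IntegrableOn (fun x => exp (-k₀ * f x) * g x) S μ) (hS : MeasurableSet S)
    (hf : Measurable f) (hg : Measurable g) (hf_nonneg : ∀ x ∈ S, 0 ≤ f x) {k : ℝ} (hk : k₀ ≤ k) :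
    IntegrableOn (fun x => exp (-k * f x) * g x) S μ := by
  refine Integrable.mono hint ((hf.const_mul (-k)).exp.mul hg).aestronglyMeasurable ?_
  refine (ae_restrict_iff' hS).2 (.of_forall fun x hx => ?_)
  simp only [norm_mul, norm_eq_abs, abs_exp]
  gcongr
  nlinarith [hf_nonneg x hx]

theorem tendsto_rpow_mul_setIntegral_exp_neg_mul (b : ℝ)
    (hint : IntegrableOn (fun x => exp (-k₀ * f x) * g x) S μ) {c : ℝ} (hc : 0 < c)
    (hfc : ∀ x ∈ S, c ≤ f x) (hS : MeasurableSet S) :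
    Tendsto (fun k => k ^ b * ∫ x in S, exp (-k * f x) * g x ∂μ) atTop (𝓝 0) := by
  set C := ∫ x in S, ‖exp (-k₀ * f x) * g x‖ ∂μ
  have hbound : ∀ k, k₀ ≤ k →
      ‖∫ x in S, exp (-k * f x) * g x ∂μ‖ ≤ exp (-(k - k₀) * c) * C := by
    intro k hk
    rw [← integral_const_mul]
    refine norm_integral_le_of_norm_le (hint.norm.const_mul _) ((ae_restrict_iff' hS).2 ?_)
    refine .of_forall fun x hx => ?_
    simp only [norm_mul, norm_eq_abs, abs_exp, ← mul_assoc, ← exp_add]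
    gcongr
    nlinarith [hfc x hx]
  have hdecay : Tendsto (fun k => k ^ b * (exp (-(k - k₀) * c) * C)) atTop (𝓝 0) := by
    have := (tendsto_rpow_mul_exp_neg_mul_atTop_nhds_zero b c hc).mul_const (exp (k₀ * c) * C)
    rw [zero_mul] at this
    refine this.congr fun k => ?_
    rw [show -(k - k₀) * c = -c * k + k₀ * c by ring, exp_add]
    ring
  refine squeeze_zero_norm' ?_ hdecay
  filter_upwards [eventually_ge_atTop k₀, eventually_gt_atTop 0] with k hk hk0
  rw [norm_mul, norm_of_nonneg (rpow_pos_of_pos hk0 b).le]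
  exact mul_le_mul_of_nonneg_left (hbound k hk) (rpow_pos_of_pos hk0 b).le

theorem tendsto_rpow_mul_setIntegral_exp_neg_mul_of_subset {R U : Set α} {b c Z : ℝ}
    (hR : MeasurableSet R) (hU : MeasurableSet U) (hUR : U ⊆ R)
    (hint : ∀ k, k₀ ≤ k → IntegrableOn (fun x => exp (-k * f x) * g x) R μ) (hc : 0 < c)
    (hfc : ∀ x ∈ R \ U, c ≤ f x)
    (hU_lim : Tendsto (fun k => k ^ b * ∫ x in U, exp (-k * f x) * g x ∂μ) atTop (𝓝 Z)) :
    Tendsto (fun k => k ^ b * ∫ x in R, exp (-k * f x) * g x ∂μ) atTop (𝓝 Z) := by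
  have hfar := tendsto_rpow_mul_setIntegral_exp_neg_mul b
    ((hint k₀ le_rfl).mono_set sdiff_subset) hc hfc (hR.diff hU)
  simpa only [add_zero] using (hU_lim.add hfar).congr' <| by
    filter_upwards [eventually_ge_atTop k₀] with k hk
    rw [← mul_add, ← setIntegral_union disjoint_sdiff_right (hR.diff hU)
      ((hint k hk).mono_set hUR) ((hint k hk).mono_set sdiff_subset), union_sdiff_cancel hUR]

end Laplace

theorem Continuous.exists_pos_le_of_pos {X : Type*} [TopologicalSpace X] [CompactSpace X]
    {u : X → ℝ} (hu : Continuous u) (hpos : ∀ x, 0 < u x) : ∃ m > 0, ∀ x, m ≤ u x := by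
  cases isEmpty_or_nonempty X with
  | inl _ => exact ⟨1, one_pos, isEmptyElim⟩
  | inr _ =>
    obtain ⟨x₀, -, hx₀⟩ := isCompact_univ.exists_isMinOn univ_nonempty hu.continuousOn
    exact ⟨u x₀, hpos x₀, fun x => hx₀ (mem_univ x)⟩

theorem isLittleO_sub_mul_rpow_neg_of_tendsto {I : ℝ → ℝ} {a Z : ℝ}
    (h : Tendsto (fun k => k ^ a * I k) atTop (𝓝 Z)) :
    (fun k => I k - Z * k ^ (-a)) =o[atTop] fun k => k ^ (-a) := by
  refine (isLittleO_iff_tendsto' ?_).2 ?_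
  · filter_upwards [eventually_gt_atTop 0] with k hk h0
    exact absurd h0 (rpow_pos_of_pos hk _).ne'
  · rw [← sub_self Z]
    refine (h.sub_const Z).congr' ?_
    filter_upwards [eventually_gt_atTop 0] with k hk
    rw [rpow_neg hk.le]
    field_simp [(rpow_pos_of_pos hk a).ne']

theorem integral_Ioi_pow_mul_comp_mul_left (h : ℝ → ℝ) (m : ℕ) {b : ℝ} (hb : 0 < b) :
    ∫ r in Ioi (0 : ℝ), r ^ m * h r = b ^ (m + 1) * ∫ s in Ioi (0 : ℝ), s ^ m * h (b * s) := by
  have := integral_comp_mul_left_Ioi (fun r => r ^ m * h r) 0 hb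
  rw [mul_zero, smul_eq_mul] at this
  calc ∫ r in Ioi (0 : ℝ), r ^ m * h r = b * ∫ s in Ioi (0 : ℝ), (b * s) ^ m * h (b * s) := by
        rw [this, ← mul_assoc, mul_inv_cancel₀ hb.ne', one_mul]
    _ = _ := by simp_rw [mul_pow, mul_assoc, integral_const_mul]; ring

theorem rpow_div_mul_rpow_neg_inv_mul_rpow {k s : ℝ} (hk : 0 < k) (hs : 0 < s) {ν : ℝ}
    (hν : ν ≠ 0) (a : ℝ) : k ^ (a / ν) * (k ^ (-ν⁻¹) * s) ^ a = s ^ a := by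
  rw [mul_rpow (rpow_nonneg hk.le _) hs.le, ← rpow_mul hk.le, ← mul_assoc, ← rpow_add hk,
    show a / ν + -ν⁻¹ * a = 0 by field_simp; ring, rpow_zero, one_mul]

theorem integral_prod_mul_rpow_mul_exp_neg_mul_rpow {S : Type*} [MeasurableSpace S]
    {σ : Measure S} [SFinite σ] {u v : S → ℝ} {ν lam : ℝ} (hν : 0 < ν) (hlam : 0 < lam)
    (hv : ∀ Ω, 0 < v Ω)
    (hint : Integrable (fun p : S × ℝ => u p.1 * (p.2 ^ (lam - 1) * exp (-v p.1 * p.2 ^ ν)))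
      (σ.prod (volume.restrict (Ioi 0)))) :
    ∫ p, u p.1 * (p.2 ^ (lam - 1) * exp (-v p.1 * p.2 ^ ν)) ∂(σ.prod (volume.restrict (Ioi 0))) =
      1 / ν * Gamma (lam / ν) * ∫ Ω, u Ω * v Ω ^ (-(lam / ν)) ∂σ := by
  rw [integral_prod _ hint, ← integral_const_mul]
  refine integral_congr_ae (.of_forall fun Ω => ?_)
  dsimp only
  rw [integral_const_mul, integral_rpow_mul_exp_neg_mul_rpow hν (by linarith) (hv Ω),
    sub_add_cancel, neg_div]
  ring

section Rescaling

variable {E : Type*} [NormedAddCommGroup E] [NormedSpace ℝ E]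
  {ν lam δ : ℝ} {f g : E → ℝ}

/-- The integrand of `k ^ (lam / ν) * ∫ x in ball 0 δ, exp (-k * f x) * g x` after passing to
polar coordinates `x = r • Ω` and substituting `r = k ^ (-1/ν) * s`. -/
noncomputable def laplaceRescaled (ν lam δ : ℝ) (f g : E → ℝ) (k : ℝ)
    (p : sphere (0 : E) 1 × ℝ) : ℝ :=
  k ^ ((lam - Module.finrank ℝ E) / ν) * p.2 ^ (Module.finrank ℝ E - 1) *
    (ball (0 : E) δ).indicator (fun x => exp (-k * f x) * g x) ((k ^ (-ν⁻¹) * p.2) • (p.1 : E))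

theorem measurable_laplaceRescaled [MeasurableSpace E] [BorelSpace E] (hf : Measurable f)
    (hg : Measurable g) (k : ℝ) : Measurable (laplaceRescaled ν lam δ f g k) := by
  have hφ := ((hf.const_mul (-k)).exp.mul hg).indicator (measurableSet_ball (x := (0 : E)) (ε := δ))
  unfold laplaceRescaled
  fun_prop

variable [FiniteDimensional ℝ E] [Nontrivial E]

theorem laplaceRescaled_eq_of_lt {k s : ℝ} (hk : 0 < k) (hs : 0 < s) (hν : ν ≠ 0)
    (Ω : sphere (0 : E) 1) (hδ : k ^ (-ν⁻¹) * s < δ) :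
    laplaceRescaled ν lam δ f g k (Ω, s) =
      ((k ^ (-ν⁻¹) * s) ^ (-(lam - Module.finrank ℝ E)) * g ((k ^ (-ν⁻¹) * s) • (Ω : E))) *
        (s ^ (lam - 1) *
          exp (-((k ^ (-ν⁻¹) * s) ^ (-ν) * f ((k ^ (-ν⁻¹) * s) • (Ω : E))) * s ^ ν)) := by
  set r := k ^ (-ν⁻¹) * s
  have hr : 0 < r := mul_pos (rpow_pos_of_pos hk _) hs
  have hmem : r • (Ω : E) ∈ ball (0 : E) δ := by
    rwa [mem_ball_zero_iff, norm_smul, norm_of_nonneg hr.le, norm_eq_of_mem_sphere, mul_one]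
  have hscale (a : ℝ) : k ^ (a / ν) = s ^ a * r ^ (-a) := by
    rw [← rpow_div_mul_rpow_neg_inv_mul_rpow hk hs hν a, mul_assoc, ← rpow_add hr,
      add_neg_cancel, rpow_zero, mul_one]
  have hk_eq : -k = -(r ^ (-ν)) * s ^ ν := by
    have := hscale ν
    rw [div_self hν, rpow_one] at this
    rw [this]
    ring
  have hpow : s ^ (Module.finrank ℝ E - 1) * s ^ (lam - Module.finrank ℝ E) = s ^ (lam - 1) := by
    rw [← rpow_natCast, ← rpow_add hs, Nat.cast_sub Module.finrank_pos, Nat.cast_one]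
    ring_nf
  rw [laplaceRescaled, indicator_of_mem hmem, hscale, hk_eq, ← hpow]
  ring_nf

theorem norm_laplaceRescaled_le {k s c G : ℝ} (hk : 0 < k) (hs : 0 < s) (hν : ν ≠ 0)
    (Ω : sphere (0 : E) 1) (hf_lower : ∀ ρ : ℝ, 0 < ρ → ρ < δ → c ≤ ρ ^ (-ν) * f (ρ • (Ω : E)))
    (hg_upper : ∀ ρ : ℝ, 0 < ρ → ρ < δ →
      |ρ ^ (-(lam - Module.finrank ℝ E)) * g (ρ • (Ω : E))| ≤ G) (hG : 0 ≤ G) :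
    ‖laplaceRescaled ν lam δ f g k (Ω, s)‖ ≤ G * (s ^ (lam - 1) * exp (-c * s ^ ν)) := by
  have hr : 0 < k ^ (-ν⁻¹) * s := mul_pos (rpow_pos_of_pos hk _) hs
  by_cases hrδ : k ^ (-ν⁻¹) * s < δ
  · rw [laplaceRescaled_eq_of_lt hk hs hν Ω hrδ, norm_mul, norm_eq_abs, norm_eq_abs,
      abs_of_nonneg (mul_nonneg (rpow_pos_of_pos hs _).le (exp_pos _).le)]
    gcongr
    · exact hg_upper _ hr hrδ
    · exact hf_lower _ hr hrδ
  · have hmem : (k ^ (-ν⁻¹) * s) • (Ω : E) ∉ ball (0 : E) δ := by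
      rwa [mem_ball_zero_iff, norm_smul, norm_of_nonneg hr.le, norm_eq_of_mem_sphere, mul_one]
    rw [laplaceRescaled, indicator_of_notMem hmem, mul_zero, norm_zero]
    positivity

theorem tendsto_laplaceRescaled (hν : 0 < ν) (hδ : 0 < δ) {s : ℝ} (hs : 0 < s)
    (Ω : sphere (0 : E) 1) {a b : ℝ}
    (hf_lim : Tendsto (fun ρ : ℝ => ρ ^ (-ν) * f (ρ • (Ω : E))) (𝓝[>] 0) (𝓝 a))
    (hg_lim : Tendsto (fun ρ : ℝ => ρ ^ (-(lam - Module.finrank ℝ E)) * g (ρ • (Ω : E)))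
      (𝓝[>] 0) (𝓝 b)) :
    Tendsto (fun k => laplaceRescaled ν lam δ f g k (Ω, s)) atTop
      (𝓝 (b * (s ^ (lam - 1) * exp (-a * s ^ ν)))) := by
  have hr : Tendsto (fun k : ℝ => k ^ (-ν⁻¹) * s) atTop (𝓝[>] 0) := by
    refine tendsto_nhdsWithin_iff.2 ⟨?_, ?_⟩
    · simpa using (tendsto_rpow_neg_atTop (inv_pos.2 hν)).mul_const s
    · filter_upwards [eventually_gt_atTop 0] with k hk
      exact mul_pos (rpow_pos_of_pos hk _) hs
  have hlim := (hg_lim.comp hr).mul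
    (((hf_lim.comp hr).neg.mul_const (s ^ ν)).rexp.const_mul (s ^ (lam - 1)))
  refine hlim.congr' ?_
  filter_upwards [eventually_gt_atTop 0, (tendsto_nhdsWithin_iff.1 hr).1.eventually
    (gt_mem_nhds hδ)] with k hk hkδ
  exact (laplaceRescaled_eq_of_lt hk hs hν.ne' Ω hkδ).symm

variable [MeasurableSpace E] [BorelSpace E] (μ : Measure E) [μ.IsAddHaarMeasure]

theorem rpow_mul_setIntegral_ball_eq_integral_laplaceRescaled {k : ℝ} (hk : 0 < k) (hν : ν ≠ 0)
    (hint : IntegrableOn (fun x => exp (-k * f x) * g x) (ball 0 δ) μ)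
    (hG : Integrable (laplaceRescaled ν lam δ f g k) (μ.toSphere.prod (volume.restrict (Ioi 0)))) :
    k ^ (lam / ν) * ∫ x in ball (0 : E) δ, exp (-k * f x) * g x ∂μ =
      ∫ p, laplaceRescaled ν lam δ f g k p ∂(μ.toSphere.prod (volume.restrict (Ioi 0))) := by
  have hpow : k ^ (lam / ν) * (k ^ (-ν⁻¹)) ^ Module.finrank ℝ E =
      k ^ ((lam - Module.finrank ℝ E) / ν) := by
    rw [← rpow_natCast, ← rpow_mul hk.le, ← rpow_add hk]
    congr 1
    field_simp
    ring
  rw [← integral_indicator measurableSet_ball, integral_eq_integral_sphere_integral_Ioi μ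
      ((integrable_indicator_iff measurableSet_ball).2 hint), integral_prod _ hG,
    ← integral_const_mul]
  refine integral_congr_ae (.of_forall fun Ω => ?_)
  dsimp only
  rw [integral_Ioi_pow_mul_comp_mul_left _ _ (rpow_pos_of_pos hk (-ν⁻¹)),
    Nat.sub_add_cancel Module.finrank_pos, ← mul_assoc, hpow, ← integral_const_mul]
  simp only [laplaceRescaled, mul_assoc]

theorem tendsto_rpow_mul_setIntegral_ball (hν : 0 < ν) (hlam : 0 < lam) (hδ : 0 < δ)
    (hf : Measurable f) (hg : Measurable g) {c : ℝ} (hc : 0 < c) {G₀ f₀ g₀ : sphere (0 : E) 1 → ℝ}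
    (hG₀ : Integrable G₀ μ.toSphere)
    (hf_lower : ∀ ρ : ℝ, 0 < ρ → ρ < δ → ∀ Ω : sphere (0 : E) 1, c ≤ ρ ^ (-ν) * f (ρ • (Ω : E)))
    (hg_upper : ∀ ρ : ℝ, 0 < ρ → ρ < δ → ∀ Ω : sphere (0 : E) 1,
      |ρ ^ (-(lam - Module.finrank ℝ E)) * g (ρ • (Ω : E))| ≤ G₀ Ω)
    (hf_lim : ∀ Ω : sphere (0 : E) 1,
      Tendsto (fun ρ : ℝ => ρ ^ (-ν) * f (ρ • (Ω : E))) (𝓝[>] 0) (𝓝 (f₀ Ω)))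
    (hg_lim : ∀ Ω : sphere (0 : E) 1, Tendsto
      (fun ρ : ℝ => ρ ^ (-(lam - Module.finrank ℝ E)) * g (ρ • (Ω : E))) (𝓝[>] 0) (𝓝 (g₀ Ω)))
    (hint : ∀ᶠ k in atTop, IntegrableOn (fun x => exp (-k * f x) * g x) (ball 0 δ) μ) :
    Tendsto (fun k => k ^ (lam / ν) * ∫ x in ball (0 : E) δ, exp (-k * f x) * g x ∂μ) atTop
      (𝓝 (1 / ν * Gamma (lam / ν) * ∫ Ω, g₀ Ω * f₀ Ω ^ (-(lam / ν)) ∂μ.toSphere)) := by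
  set P := μ.toSphere.prod (volume.restrict (Ioi (0 : ℝ)))
  set B : sphere (0 : E) 1 × ℝ → ℝ := fun p => G₀ p.1 * (p.2 ^ (lam - 1) * exp (-c * p.2 ^ ν))
  have hf₀ (Ω : sphere (0 : E) 1) : 0 < f₀ Ω := hc.trans_le <| ge_of_tendsto (hf_lim Ω) <| by
    filter_upwards [Ioo_mem_nhdsGT hδ] with ρ hρ using hf_lower ρ hρ.1 hρ.2 Ω
  have hpos : ∀ᵐ p ∂P, 0 < p.2 :=
    Measure.quasiMeasurePreserving_snd.ae (ae_restrict_mem measurableSet_Ioi)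
  have hmeas (k : ℝ) : AEStronglyMeasurable (laplaceRescaled ν lam δ f g k) P :=
    (measurable_laplaceRescaled hf hg k).aestronglyMeasurable
  have hbound (p : sphere (0 : E) 1 × ℝ) (hp : 0 < p.2) (k : ℝ) (hk : 0 < k) :
      ‖laplaceRescaled ν lam δ f g k p‖ ≤ B p :=
    norm_laplaceRescaled_le hk hp hν.ne' p.1 (fun ρ h₁ h₂ => hf_lower ρ h₁ h₂ p.1)
      (fun ρ h₁ h₂ => hg_upper ρ h₁ h₂ p.1)
      ((abs_nonneg _).trans (hg_upper (δ / 2) (half_pos hδ) (half_lt_self hδ) p.1))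
  have hlim : ∀ᵐ p ∂P, Tendsto (fun k => laplaceRescaled ν lam δ f g k p) atTop
      (𝓝 (g₀ p.1 * (p.2 ^ (lam - 1) * exp (-f₀ p.1 * p.2 ^ ν)))) := by
    filter_upwards [hpos] with p hp
    exact tendsto_laplaceRescaled hν hδ hp p.1 (hf_lim p.1) (hg_lim p.1)
  have hB : Integrable B P :=
    hG₀.mul_prod (integrableOn_rpow_mul_exp_neg_mul_rpow (by linarith) hν hc)
  have hlim_int : Integrable (fun p : sphere (0 : E) 1 × ℝ =>
      g₀ p.1 * (p.2 ^ (lam - 1) * exp (-f₀ p.1 * p.2 ^ ν))) P := by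
    refine hB.mono' (aestronglyMeasurable_of_tendsto_ae atTop hmeas hlim) ?_
    filter_upwards [hlim, hpos] with p hp_lim hp
    exact le_of_tendsto hp_lim.norm ((eventually_gt_atTop 0).mono (hbound p hp))
  rw [← integral_prod_mul_rpow_mul_exp_neg_mul_rpow hν hlam hf₀ hlim_int]
  refine (tendsto_integral_filter_of_dominated_convergence B (.of_forall hmeas) ?_ hB hlim).congr'
    ?_
  · filter_upwards [eventually_gt_atTop 0] with k hk
    filter_upwards [hpos] with p hp using hbound p hp k hk
  · filter_upwards [hint, eventually_gt_atTop 0] with k hk_int hk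
    refine (rpow_mul_setIntegral_ball_eq_integral_laplaceRescaled μ hk hν.ne' hk_int ?_).symm
    exact hB.mono' (hmeas k) (by filter_upwards [hpos] with p hp using hbound p hp k hk)

end Rescaling

theorem laplace_type_leading_coefficient_general (d : ℕ) (hd : 0 < d)
    (R : Set (EuclideanSpace ℝ (Fin d))) (hR : MeasurableSet R) (h0 : 0 ∈ interior R)
    (f g : EuclideanSpace ℝ (Fin d) → ℝ) (hfm : Measurable f) (hgm : Measurable g)
    (ν lam : ℝ) (hν : 0 < ν) (hlam : 0 < lam)
    (f₀ g₀ : Metric.sphere (0 : EuclideanSpace ℝ (Fin d)) 1 → ℝ)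
    (hf₀c : Continuous f₀) (hf₀pos : ∀ Ω, 0 < f₀ Ω)
    (hg₀ : Integrable g₀ ((volume : Measure (EuclideanSpace ℝ (Fin d))).toSphere))
    (hfexp : ∀ ε > 0, ∃ δ > 0, ∀ ρ : ℝ, 0 < ρ → ρ < δ →
      ∀ Ω : Metric.sphere (0 : EuclideanSpace ℝ (Fin d)) 1,
        |f (ρ • (Ω : EuclideanSpace ℝ (Fin d))) - ρ ^ ν * f₀ Ω| ≤ ε * ρ ^ ν)
    (hgexp : ∀ ε > 0, ∃ δ > 0, ∀ ρ : ℝ, 0 < ρ → ρ < δ →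
      ∀ Ω : Metric.sphere (0 : EuclideanSpace ℝ (Fin d)) 1,
        |g (ρ • (Ω : EuclideanSpace ℝ (Fin d))) - ρ ^ (lam - d) * g₀ Ω| ≤ ε * ρ ^ (lam - d))
    (hmin : f 0 = 0) (hpos : ∀ x ∈ R, x ≠ 0 → 0 < f x)
    (hbdd : ∀ δ > 0, ∃ c > 0, ∀ x ∈ R, δ ≤ ‖x‖ → c ≤ f x)
    (k₀ : ℝ)
    (hint : IntegrableOn (fun x => Real.exp (-k₀ * f x) * g x) R) :
    (fun k : ℝ => (∫ x in R, Real.exp (-k * f x) * g x) -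
        ((1 / ν) * Real.Gamma (lam / ν) *
            ∫ Ω, g₀ Ω * (f₀ Ω) ^ (-(lam / ν))
              ∂((volume : Measure (EuclideanSpace ℝ (Fin d))).toSphere)) *
          k ^ (-(lam / ν)))
      =o[atTop] fun k : ℝ => k ^ (-(lam / ν)) := by
  have : Nonempty (Fin d) := ⟨⟨0, hd⟩⟩
  have hfa : RadialAsymptotic f ν f₀ := hfexp
  have hga : RadialAsymptotic g (lam - Module.finrank ℝ (EuclideanSpace ℝ (Fin d))) g₀ := by
    rwa [finrank_euclideanSpace_fin]
  have hf_nonneg (x) (hx : x ∈ R) : 0 ≤ f x := by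
    rcases eq_or_ne x 0 with rfl | hx0
    exacts [hmin.ge, (hpos x hx hx0).le]
  have hintR (k) (hk : k₀ ≤ k) := hint.exp_neg_mul_mul_of_le hR hfm hgm hf_nonneg hk
  obtain ⟨m, hm, hm_le⟩ := hf₀c.exists_pos_le_of_pos hf₀pos
  obtain ⟨δf, hδf, hf_lower⟩ := hfa.exists_le_rpow_neg_mul hm_le (half_lt_self hm)
  obtain ⟨δg, hδg, hg_upper⟩ := hga.exists_abs_rpow_neg_mul_le
  obtain ⟨δ₀, hδ₀, hball⟩ := Metric.mem_nhds_iff.mp (mem_interior_iff_mem_nhds.mp h0)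
  set δ := min δ₀ (min δf δg)
  have hδ : 0 < δ := lt_min hδ₀ (lt_min hδf hδg)
  have hballR : ball 0 δ ⊆ R := (ball_subset_ball (min_le_left _ _)).trans hball
  obtain ⟨c, hc, hcf⟩ := hbdd δ hδ
  refine isLittleO_sub_mul_rpow_neg_of_tendsto <|
    tendsto_rpow_mul_setIntegral_exp_neg_mul_of_subset hR measurableSet_ball hballR hintR hc
      (fun x hx => hcf x hx.1 (not_lt.1 (mt mem_ball_zero_iff.2 hx.2))) ?_
  refine tendsto_rpow_mul_setIntegral_ball volume hν hlam hδ hfm hgm (half_pos hm)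
    (hg₀.abs.add (integrable_const 1))
    (fun ρ h₁ h₂ => hf_lower ρ h₁ (h₂.trans_le ((min_le_right _ _).trans (min_le_left _ _))))
    (fun ρ h₁ h₂ => hg_upper ρ h₁ (h₂.trans_le ((min_le_right _ _).trans (min_le_right _ _))))
    hfa.tendsto hga.tendsto ?_
  filter_upwards [eventually_ge_atTop k₀] with k hk using (hintR k hk).mono_set hballR

/-- leading coefficient of the general Laplace-type expansion:
under the hypotheses of the general expansion (radial asymptotics of f and g,
f₀ > 0 continuous, unique minimum, integrability), the leading coefficient of
∫_R e^{-kf} g dx ∼ ζ₀ k^{-λ/ν} is ζ₀ = (1/ν)Γ(λ/ν)∫_{S^{d-1}} g₀(Ω) f₀(Ω)^{-λ/ν} dΩ. -/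
theorem laplace_type_leading_coefficient (d : ℕ) (hd : 0 < d)
    (R : Set (EuclideanSpace ℝ (Fin d))) (hR : MeasurableSet R) (h0 : 0 ∈ interior R)
    (f g : EuclideanSpace ℝ (Fin d) → ℝ) (hfm : Measurable f) (hgm : Measurable g)
    (ν lam : ℝ) (hν : 0 < ν) (hlam : 0 < lam)
    (f₀ g₀ : Metric.sphere (0 : EuclideanSpace ℝ (Fin d)) 1 → ℝ)
    (hf₀c : Continuous f₀) (hf₀pos : ∀ Ω, 0 < f₀ Ω)
    (hg₀ : Integrable g₀ ((volume : Measure (EuclideanSpace ℝ (Fin d))).toSphere))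
    (hfexp : ∀ ε > 0, ∃ δ > 0, ∀ ρ : ℝ, 0 < ρ → ρ < δ →
      ∀ Ω : Metric.sphere (0 : EuclideanSpace ℝ (Fin d)) 1,
        |f (ρ • (Ω : EuclideanSpace ℝ (Fin d))) - ρ ^ ν * f₀ Ω| ≤ ε * ρ ^ ν)
    (hgexp : ∀ ε > 0, ∃ δ > 0, ∀ ρ : ℝ, 0 < ρ → ρ < δ →
      ∀ Ω : Metric.sphere (0 : EuclideanSpace ℝ (Fin d)) 1,
        |g (ρ • (Ω : EuclideanSpace ℝ (Fin d))) - ρ ^ (lam - d) * g₀ Ω| ≤ ε * ρ ^ (lam - d))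
    (hmin : f 0 = 0) (hpos : ∀ x ∈ R, x ≠ 0 → 0 < f x)
    (hbdd : ∀ δ > 0, ∃ c > 0, ∀ x ∈ R, δ ≤ ‖x‖ → c ≤ f x)
    (k₀ : ℝ) (hk₀ : 0 < k₀)
    (hint : IntegrableOn (fun x => Real.exp (-k₀ * f x) * g x) R) :
    (fun k : ℝ => (∫ x in R, Real.exp (-k * f x) * g x) -
        ((1 / ν) * Real.Gamma (lam / ν) *
            ∫ Ω, g₀ Ω * (f₀ Ω) ^ (-(lam / ν))
              ∂((volume : Measure (EuclideanSpace ℝ (Fin d))).toSphere)) *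
          k ^ (-(lam / ν)))
      =o[atTop] fun k : ℝ => k ^ (-(lam / ν)) :=
  laplace_type_leading_coefficient_general d hd R hR h0 f g hfm hgm ν lam hν hlam f₀ g₀ hf₀c hf₀pos
    hg₀ hfexp hgexp hmin hpos hbdd k₀ hint
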